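/- arXiv:2108.04700 — 5 statements merged into one kernel-verified Lean document; each statement's English description precedes it below -/
import Mathlib

section
/- For every η-admissible permutation σ, |N^+_σ[⪯]| = inv(N(π_η(σ^{-1}))), i.e. the number of pairs (i,j) with σ(i)<j, σ^{-1}(j)<i, π_η(i) ≤ π_η(j) and π_η(i) ≤ π_η(σ(i)) equals the number of inversions of the non-exceeding subword of π_η(σ^{-1}). -/
/-! An admissible `σ` is increasing on each block of `η`. Since blocks are intervals, for positions
`a < b` the preimages are inverted, `σ⁻¹ b < σ⁻¹ a`, exactly when `σ⁻¹ b` lies in a strictly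
earlier block than `σ⁻¹ a`. With this, `(i, j) ↦ (σ i, j)` maps `N⁺_σ[⪯]` bijectively onto the
inversions of the non-exceeding subword of `π_η(σ⁻¹)`. -/

open Finset

noncomputable section
open scoped Classical

/-- 0-based block index of position `i` (0-based) with respect to the composition
`η` with `r` parts: the number of complete blocks that end at or before position `i`. -/
def blk (r : ℕ) (η : ℕ → ℕ) (i : ℕ) : ℕ :=
  ((Finset.range r).filter (fun k => ∑ j ∈ Finset.range (k + 1), η j ≤ i)).card

/-- Descent set of a word of length `n` (0-based positions `i` with `w i > w (i+1)`). -/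
def desSet (n : ℕ) (w : Fin n → ℕ) : Finset (Fin n) :=
  Finset.univ.filter (fun i => ∃ h : i.1 + 1 < n, w ⟨i.1 + 1, h⟩ < w i)

/-- Descent number. -/
def des (n : ℕ) (w : Fin n → ℕ) : ℕ := (desSet n w).card

/-- Major index (descents counted in 1-based positions). -/
def maj (n : ℕ) (w : Fin n → ℕ) : ℕ := ∑ i ∈ desSet n w, (i.1 + 1)

/-- Excedance set of a word w.r.t. the trivial word of `η`. -/
def excSet (r : ℕ) (η : ℕ → ℕ) (n : ℕ) (w : Fin n → ℕ) : Finset (Fin n) :=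
  Finset.univ.filter (fun i => blk r η i.1 < w i)

/-- Excedance number. -/
def exc (r : ℕ) (η : ℕ → ℕ) (n : ℕ) (w : Fin n → ℕ) : ℕ := (excSet r η n w).card

/-- Weak inversions of the exceeding subword. -/
def imvE (r : ℕ) (η : ℕ → ℕ) (n : ℕ) (w : Fin n → ℕ) : ℕ :=
  (Finset.univ.filter (fun p : Fin n × Fin n => p.1 < p.2 ∧
    blk r η p.1.1 < w p.1 ∧ blk r η p.2.1 < w p.2 ∧ w p.2 ≤ w p.1)).card

/-- Inversions of the non-exceeding subword. -/
def invN (r : ℕ) (η : ℕ → ℕ) (n : ℕ) (w : Fin n → ℕ) : ℕ :=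
  (Finset.univ.filter (fun p : Fin n × Fin n => p.1 < p.2 ∧
    ¬ blk r η p.1.1 < w p.1 ∧ ¬ blk r η p.2.1 < w p.2 ∧ w p.2 < w p.1)).card

/-- Han's Denert statistic on multiset permutations. -/
def denh (r : ℕ) (η : ℕ → ℕ) (n : ℕ) (w : Fin n → ℕ) : ℕ :=
  (∑ i ∈ excSet r η n w, (i.1 + 1)) + imvE r η n w + invN r η n w

/-- The set `S_η` of multiset permutations: all rearrangements of the trivial word. -/
def msetPerms (r : ℕ) (η : ℕ → ℕ) (n : ℕ) : Finset (Fin n → ℕ) :=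
  (Finset.univ : Finset (Equiv.Perm (Fin n))).image (fun σ i => blk r η (σ i).1)

/-- `η`-admissible permutations: `Des(σ) ⊆ Des(η)`. -/
def admissible (r : ℕ) (η : ℕ → ℕ) (n : ℕ) (σ : Equiv.Perm (Fin n)) : Prop :=
  ∀ i : Fin n, ∀ h : i.1 + 1 < n, σ ⟨i.1 + 1, h⟩ < σ i → blk r η i.1 < blk r η (i.1 + 1)

/-- The multiset permutation `π_η(σ⁻¹)` associated with `σ ∈ S_n`. -/
def wordOf (r : ℕ) (η : ℕ → ℕ) (n : ℕ) (σ : Equiv.Perm (Fin n)) : Fin n → ℕ :=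
  fun j => blk r η ((σ⁻¹ j).1)

/-- The set `I_σ = {j : π_η(σ⁻¹(j)) > π_η(j)}`. -/
def Iset (r : ℕ) (η : ℕ → ℕ) (n : ℕ) (σ : Equiv.Perm (Fin n)) : Finset (Fin n) :=
  Finset.univ.filter (fun j => blk r η j.1 < blk r η ((σ⁻¹ j).1))

def iexc (r : ℕ) (η : ℕ → ℕ) (n : ℕ) (σ : Equiv.Perm (Fin n)) : ℕ := (Iset r η n σ).card

/-- `N⁺_σ`. -/
def Nplus (r : ℕ) (η : ℕ → ℕ) (n : ℕ) (σ : Equiv.Perm (Fin n)) : Finset (Fin n × Fin n) :=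
  Finset.univ.filter (fun p => blk r η p.1.1 ≤ blk r η p.2.1 ∧ σ p.1 < p.2 ∧ σ⁻¹ p.2 < p.1)

/-- `N⁻_σ`. -/
def Nminus (r : ℕ) (η : ℕ → ℕ) (n : ℕ) (σ : Equiv.Perm (Fin n)) : Finset (Fin n × Fin n) :=
  Finset.univ.filter (fun p => blk r η p.2.1 < blk r η p.1.1 ∧ σ p.1 < p.2 ∧ p.1 < σ⁻¹ p.2)

/-- Denert's statistic. -/
def den (r : ℕ) (η : ℕ → ℕ) (n : ℕ) (σ : Equiv.Perm (Fin n)) : ℤ :=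
  (∑ j ∈ Iset r η n σ, (j.1 + 1) : ℕ) + (Nplus r η n σ).card - (Nminus r η n σ).card
    - iexc r η n σ

theorem blk_monotone (r : ℕ) (η : ℕ → ℕ) : Monotone (blk r η) :=
  fun _ _ hij => card_le_card <| monotone_filter_right _ fun _ _ hk => hk.trans hij

section DescentsAtLevelChanges

variable {α : Type*} [PartialOrder α] {f : ℕ → α} {n : ℕ} {σ : Equiv.Perm (Fin n)}

theorem apply_lt_apply_succ_of_eq
    (hdes : ∀ i : Fin n, ∀ h : i.1 + 1 < n, σ ⟨i.1 + 1, h⟩ < σ i → f i.1 < f (i.1 + 1))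
    {i : ℕ} (h : i + 1 < n) (heq : f i = f (i + 1)) : σ ⟨i, by omega⟩ < σ ⟨i + 1, h⟩ := by
  refine lt_of_le_of_ne (not_lt.1 fun hlt => (hdes ⟨i, by omega⟩ h hlt).ne heq) ?_
  simp [Fin.ext_iff]

theorem apply_lt_apply_of_eq (hf : Monotone f)
    (hdes : ∀ i : Fin n, ∀ h : i.1 + 1 < n, σ ⟨i.1 + 1, h⟩ < σ i → f i.1 < f (i.1 + 1))
    {x y : Fin n} (hxy : x < y) (heq : f x = f y) : σ x < σ y := by
  obtain ⟨x, hx⟩ := x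
  obtain ⟨y, hy⟩ := y
  simp only [Fin.mk_lt_mk] at hxy heq ⊢
  induction y, hxy using Nat.le_induction with
  | base => exact apply_lt_apply_succ_of_eq hdes hy heq
  | succ m hxm ih =>
    have hxm_eq : f x = f m := le_antisymm (hf (by omega)) (heq ▸ hf (by omega))
    exact (ih (by omega) hxm_eq).trans (apply_lt_apply_succ_of_eq hdes hy (hxm_eq ▸ heq))

theorem inv_lt_iff_of_apply_lt (hf : Monotone f)
    (hdes : ∀ i : Fin n, ∀ h : i.1 + 1 < n, σ ⟨i.1 + 1, h⟩ < σ i → f i.1 < f (i.1 + 1))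
    {i j : Fin n} (hij : σ i < j) : σ⁻¹ j < i ↔ f (σ⁻¹ j) < f i := by
  refine ⟨fun h => lt_of_le_of_ne (hf h.le) fun heq => ?_, fun h => ?_⟩
  · have hji := apply_lt_apply_of_eq hf hdes h heq
    rw [show σ (σ⁻¹ j) = j from σ.apply_symm_apply j] at hji
    exact hji.asymm hij
  · exact lt_of_not_ge fun hle => (hf hle).not_gt h

end DescentsAtLevelChanges

theorem NplusPrecEq_general (n r : ℕ) (η : ℕ → ℕ)
    (σ : Equiv.Perm (Fin n)) (hσ : admissible r η n σ) :
    (Finset.univ.filter (fun p : Fin n × Fin n =>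
        σ p.1 < p.2 ∧ σ⁻¹ p.2 < p.1 ∧ blk r η p.1.1 ≤ blk r η p.2.1 ∧
          blk r η p.1.1 ≤ blk r η ((σ p.1).1))).card
      = invN r η n (wordOf r η n σ) := by
  have hmono := blk_monotone r η
  unfold invN wordOf
  refine card_equiv (σ.prodCongr (Equiv.refl _)) fun ⟨i, j⟩ => ?_
  have hσσ : σ⁻¹ (σ i) = i := σ.symm_apply_apply i
  simp only [mem_filter, mem_univ, true_and, Equiv.prodCongr_apply, Prod.map, Equiv.refl_apply,
    hσσ, not_lt]
  refine and_congr_right fun hij => ?_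
  rw [inv_lt_iff_of_apply_lt hmono hσ hij]
  constructor
  · rintro ⟨hji, hblk_j, hblk_σ⟩
    exact ⟨hblk_σ, hji.le.trans hblk_j, hji⟩
  · rintro ⟨hblk_σ, -, hji⟩
    exact ⟨hji, hblk_σ.trans (hmono hij.le), hblk_σ⟩

/-- `|N⁺_σ[⪯]| = inv(N(π_η(σ⁻¹)))`. -/
theorem NplusPrecEq (n r : ℕ) (η : ℕ → ℕ)
    (hpos : ∀ k < r, 0 < η k) (hsum : ∑ k ∈ Finset.range r, η k = n)
    (σ : Equiv.Perm (Fin n)) (hσ : admissible r η n σ) :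
    (Finset.univ.filter (fun p : Fin n × Fin n =>
        σ p.1 < p.2 ∧ σ⁻¹ p.2 < p.1 ∧ blk r η p.1.1 ≤ blk r η p.2.1 ∧
          blk r η p.1.1 ≤ blk r η ((σ p.1).1))).card
      = invN r η n (wordOf r η n σ) :=
  NplusPrecEq_general n r η σ hσ
end
end

section
/- For every η-admissible permutation σ, |N^+_σ[≻]| = imv(E(π_η(σ^{-1}))) + |N^-_σ| + iexc(σ). -/
open Finset

noncomputable section
open scoped Classical

namespace NplusAux

def S (η : ℕ → ℕ) (k : ℕ) : ℕ := ∑ j ∈ Finset.range k, η j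

lemma S_mono (η : ℕ → ℕ) : Monotone (S η) := fun a b hab =>
  Finset.sum_le_sum_of_subset (Finset.range_subset_range.2 hab)

lemma blk_mono (r : ℕ) (η : ℕ → ℕ) : Monotone (blk r η) := by
  intro a b hab
  apply Finset.card_le_card
  intro k hk
  simp only [Finset.mem_filter, Finset.mem_range] at hk ⊢
  exact ⟨hk.1, hk.2.trans hab⟩

lemma lt_blk_iff (r : ℕ) (η : ℕ → ℕ) {i k : ℕ} (hk : k < r) :
    k < blk r η i ↔ S η (k + 1) ≤ i := by
  constructor
  · intro h
    by_contra hle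
    push_neg at hle
    have hsub : ((Finset.range r).filter fun k' => ∑ j ∈ Finset.range (k' + 1), η j ≤ i)
        ⊆ Finset.range k := by
      intro k' hk'
      simp only [Finset.mem_filter, Finset.mem_range] at hk' ⊢
      by_contra hge
      push_neg at hge
      have : S η (k + 1) ≤ S η (k' + 1) := S_mono η (by omega)
      have : S η (k + 1) ≤ i := le_trans this hk'.2
      omega
    have := Finset.card_le_card hsub
    simp only [Finset.card_range] at this
    unfold blk at h
    omega
  · intro h
    have hsub : Finset.range (k + 1)
        ⊆ ((Finset.range r).filter fun k' => ∑ j ∈ Finset.range (k' + 1), η j ≤ i) := by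
      intro k' hk'
      simp only [Finset.mem_range] at hk'
      simp only [Finset.mem_filter, Finset.mem_range]
      exact ⟨by omega, le_trans (S_mono η (by omega)) h⟩
    have := Finset.card_le_card hsub
    simp only [Finset.card_range] at this
    unfold blk
    omega

lemma blk_le (r : ℕ) (η : ℕ → ℕ) (i : ℕ) : blk r η i ≤ r := by
  have := Finset.card_le_card (Finset.filter_subset
    (fun k => ∑ j ∈ Finset.range (k + 1), η j ≤ i) (Finset.range r))
  simpa [blk] using this

lemma blk_lt_r {n r : ℕ} {η : ℕ → ℕ} (hsum : S η r = n) {i : ℕ} (hi : i < n) :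
    blk r η i < r := by
  rcases Nat.eq_zero_or_pos r with hr | hr
  · subst hr; simp [S] at hsum; omega
  · have h1 : ¬ (r - 1 < blk r η i) := by
      rw [lt_blk_iff r η (by omega)]
      have : r - 1 + 1 = r := by omega
      rw [this, hsum]; omega
    have := blk_le r η i
    omega

lemma S_blk_le {n r : ℕ} {η : ℕ → ℕ} (hsum : S η r = n) {i : ℕ} (hi : i < n) :
    S η (blk r η i) ≤ i := by
  rcases Nat.eq_zero_or_pos (blk r η i) with h | h
  · rw [h]; simp [S]
  · have hlt : blk r η i - 1 < r := by have := blk_le r η i; omega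
    have h2 := (lt_blk_iff r η (i := i) hlt).1 (by omega)
    have heq : blk r η i - 1 + 1 = blk r η i := by omega
    rwa [heq] at h2

lemma lt_S_blk_succ {n r : ℕ} {η : ℕ → ℕ} (hsum : S η r = n) {i : ℕ} (hi : i < n) :
    i < S η (blk r η i + 1) := by
  have hr := blk_lt_r hsum hi
  by_contra h
  push_neg at h
  have := (lt_blk_iff r η (i := i) hr).2 h
  omega

/-- `blk x < blk i ↔ x < S (blk i)` for `x, i < n`. -/
lemma blk_lt_blk_iff {n r : ℕ} {η : ℕ → ℕ} (hsum : S η r = n) {x i : ℕ}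
    (hx : x < n) (hi : i < n) :
    blk r η x < blk r η i ↔ x < S η (blk r η i) := by
  constructor
  · intro h
    have h1 : x < S η (blk r η x + 1) := lt_S_blk_succ hsum hx
    have h2 : S η (blk r η x + 1) ≤ S η (blk r η i) := S_mono η (by omega)
    omega
  · intro h
    by_contra hle
    push_neg at hle
    have := S_mono η hle
    have := S_blk_le hsum hx
    omega

lemma blk_le_blk_iff {n r : ℕ} {η : ℕ → ℕ} (hsum : S η r = n) {x i : ℕ}
    (hx : x < n) (hi : i < n) :
    blk r η i ≤ blk r η x ↔ S η (blk r η i) ≤ x := by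
  have := blk_lt_blk_iff hsum hx hi
  omega

lemma card_filter_perm {n : ℕ} (σ : Equiv.Perm (Fin n)) (p : Fin n → Prop)
    [DecidablePred p] [DecidablePred fun k => p (σ k)] :
    (Finset.univ.filter fun k => p (σ k)).card = (Finset.univ.filter p).card := by
  apply Finset.card_bij (fun k _ => σ k)
  · intro a ha
    simp only [Finset.mem_filter, Finset.mem_univ, true_and] at ha ⊢
    exact ha
  · intro a _ b _ h
    exact σ.injective h
  · intro j hj
    refine ⟨σ⁻¹ j, ?_, by simp⟩
    simp only [Finset.mem_filter, Finset.mem_univ, true_and] at hj ⊢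
    simpa using hj

lemma card_val_lt {n t : ℕ} (ht : t ≤ n) :
    (Finset.univ.filter fun v : Fin n => v.1 < t).card = t := by
  rw [← Finset.card_range t]
  apply Finset.card_bij (fun v _ => v.1)
  · intro a ha
    simp only [Finset.mem_filter, Finset.mem_univ, true_and] at ha
    simpa using ha
  · intro a _ b _ h
    exact Fin.val_injective h
  · intro m hm
    simp only [Finset.mem_range] at hm
    exact ⟨⟨m, lt_of_lt_of_le hm ht⟩, by simp [hm], rfl⟩


lemma sum_ite_eq_card_filter_perm {n : ℕ} (σ : Equiv.Perm (Fin n)) (P Q : Fin n → Prop)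
    [DecidablePred P] [DecidablePred Q]
    (h : ∀ k, Q k ↔ P (σ k)) :
    (∑ j : Fin n, (if P j then (1 : ℕ) else 0)) = (Finset.univ.filter Q).card := by
  rw [Finset.card_filter]
  exact (Fintype.sum_equiv σ (fun k => if Q k then (1 : ℕ) else 0)
    (fun j => if P j then (1 : ℕ) else 0)
    (fun k => if_congr (h k) rfl rfl)).symm

end NplusAux


namespace NplusAux

lemma sigma_lt_adj {n r : ℕ} {η : ℕ → ℕ} {σ : Equiv.Perm (Fin n)}
    (hσ : admissible r η n σ) {a i : Fin n} (hi : i.1 = a.1 + 1)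
    (hb : blk r η a.1 = blk r η i.1) : σ a < σ i := by
  have h1 : a.1 + 1 < n := hi ▸ i.2
  have hie : i = ⟨a.1 + 1, h1⟩ := Fin.ext hi
  rcases Nat.lt_trichotomy ((σ a).1) ((σ i).1) with h | h | h
  · exact h
  · exfalso
    have h2 : a = i := σ.injective (Fin.val_injective h)
    have h3 : a.1 = i.1 := congrArg Fin.val h2
    omega
  · exfalso
    have hlt : σ i < σ a := h
    rw [hie] at hlt
    have h2 := hσ a h1 hlt
    have h3 : blk r η (a.1 + 1) = blk r η i.1 := by rw [← hi]
    omega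

lemma sigma_lt_of_same_blk {n r : ℕ} {η : ℕ → ℕ} {σ : Equiv.Perm (Fin n)}
    (hσ : admissible r η n σ) :
    ∀ d : ℕ, ∀ a i : Fin n, i.1 = a.1 + d + 1 → blk r η a.1 = blk r η i.1 → σ a < σ i := by
  intro d
  induction d with
  | zero =>
    intro a i hi hb
    exact sigma_lt_adj hσ (by omega) hb
  | succ d ih =>
    intro a i hi hb
    have hm : a.1 + 1 < n := by omega
    have hb1 : blk r η a.1 = blk r η (a.1 + 1) :=
      le_antisymm (blk_mono r η (by omega))
        (by rw [hb]; exact blk_mono r η (by omega))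
    have hm1 : (⟨a.1 + 1, hm⟩ : Fin n).1 = a.1 + 1 := rfl
    have hb1' : blk r η a.1 = blk r η ((⟨a.1 + 1, hm⟩ : Fin n)).1 := by rw [hm1]; exact hb1
    have hb2 : blk r η ((⟨a.1 + 1, hm⟩ : Fin n)).1 = blk r η i.1 := by
      rw [hm1, ← hb1]; exact hb
    exact lt_trans (sigma_lt_adj hσ hm1 hb1')
      (ih ⟨a.1 + 1, hm⟩ i (by omega) hb2)

end NplusAux

/-- `|N⁺_σ[≻]| = imv(E(π_η(σ⁻¹))) + |N⁻_σ| + iexc(σ)`. -/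
theorem NplusSuccEq (n r : ℕ) (η : ℕ → ℕ)
    (hpos : ∀ k < r, 0 < η k) (hsum : ∑ k ∈ Finset.range r, η k = n)
    (σ : Equiv.Perm (Fin n)) (hσ : admissible r η n σ) :
    (Finset.univ.filter (fun p : Fin n × Fin n =>
        σ p.1 < p.2 ∧ σ⁻¹ p.2 < p.1 ∧ blk r η p.1.1 ≤ blk r η p.2.1 ∧
          blk r η ((σ p.1).1) < blk r η p.1.1)).card
      = imvE r η n (wordOf r η n σ) + (Nminus r η n σ).card + iexc r η n σ := by
  classical
  have hS : NplusAux.S η r = n := hsum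
  have hlt_iff : ∀ x i : Fin n,
      (blk r η x.1 < blk r η i.1 ↔ x.1 < NplusAux.S η (blk r η i.1)) :=
    fun x i => NplusAux.blk_lt_blk_iff hS x.2 i.2
  have hle_iff : ∀ x i : Fin n,
      (blk r η i.1 ≤ blk r η x.1 ↔ NplusAux.S η (blk r η i.1) ≤ x.1) :=
    fun x i => NplusAux.blk_le_blk_iff hS x.2 i.2
  have hsle : ∀ i : Fin n, NplusAux.S η (blk r η i.1) ≤ i.1 :=
    fun i => NplusAux.S_blk_le hS i.2
  -- Per-index key identity
  have key : ∀ i : Fin n,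
      (Finset.univ.filter fun k : Fin n =>
          σ i < σ k ∧ k < i ∧ blk r η i.1 ≤ blk r η ((σ k).1) ∧
            blk r η ((σ i).1) < blk r η i.1).card
      = (Finset.univ.filter fun a : Fin n =>
          σ a < σ i ∧ blk r η ((σ a).1) < blk r η a.1 ∧
            blk r η ((σ i).1) < blk r η i.1 ∧ blk r η i.1 ≤ blk r η a.1).card
        + (Finset.univ.filter fun k : Fin n =>
            blk r η ((σ k).1) < blk r η i.1 ∧ σ i < σ k ∧ i < k).card
        + (if blk r η ((σ i).1) < blk r η i.1 then 1 else 0) := by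
    intro i
    by_cases hsp : blk r η ((σ i).1) < blk r η i.1
    · rw [if_pos hsp]
      set s : ℕ := NplusAux.S η (blk r η i.1) with hsdef
      have hs_i : s ≤ i.1 := hsle i
      have hs_n : s ≤ n := le_trans hs_i (le_of_lt i.2)
      have hσs : (σ i).1 < s := (hlt_iff (σ i) i).1 hsp
      have hinc : ∀ a : Fin n, s ≤ a.1 → a.1 < i.1 → (σ a).1 < (σ i).1 := by
        intro a ha hai
        have h1 : blk r η a.1 ≤ blk r η i.1 := NplusAux.blk_mono r η (by omega)
        have h2 : blk r η i.1 ≤ blk r η a.1 := (hle_iff a i).2 (by omega)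
        have hba : blk r η a.1 = blk r η i.1 := le_antisymm h1 h2
        exact NplusAux.sigma_lt_of_same_blk hσ (i.1 - a.1 - 1) a i (by omega) hba
      -- rewrite the three sets into value-level form
      have hLs : (Finset.univ.filter fun k : Fin n =>
            σ i < σ k ∧ k < i ∧ blk r η i.1 ≤ blk r η ((σ k).1) ∧
              blk r η ((σ i).1) < blk r η i.1)
          = (Finset.univ.filter fun k : Fin n => k.1 < i.1 ∧ ¬ (σ k).1 < s) := by
        ext k
        simp only [Finset.mem_filter, Finset.mem_univ, true_and, Fin.lt_def]
        have h1 := hle_iff (σ k) i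
        constructor
        · rintro ⟨h2, h3, h4, -⟩
          have h5 := h1.1 h4
          exact ⟨h3, by omega⟩
        · rintro ⟨h2, h3⟩
          have h4 : s ≤ (σ k).1 := by omega
          exact ⟨by omega, h2, h1.2 h4, hsp⟩
      have hAs : (Finset.univ.filter fun a : Fin n =>
            σ a < σ i ∧ blk r η ((σ a).1) < blk r η a.1 ∧
              blk r η ((σ i).1) < blk r η i.1 ∧ blk r η i.1 ≤ blk r η a.1)
          = (Finset.univ.filter fun a : Fin n => ¬ a.1 < s ∧ (σ a).1 < (σ i).1) := by
        ext a
        simp only [Finset.mem_filter, Finset.mem_univ, true_and, Fin.lt_def]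
        have h1 := hle_iff a i
        have h2 := hlt_iff (σ a) i
        constructor
        · rintro ⟨h3, -, -, h4⟩
          have h5 := h1.1 h4
          exact ⟨by omega, h3⟩
        · rintro ⟨h3, h4⟩
          have h5 : blk r η i.1 ≤ blk r η a.1 := h1.2 (by omega)
          have h6 : blk r η ((σ a).1) < blk r η i.1 := h2.2 (by omega)
          exact ⟨h4, lt_of_lt_of_le h6 h5, hsp, h5⟩
      have hBs : (Finset.univ.filter fun k : Fin n =>
            blk r η ((σ k).1) < blk r η i.1 ∧ σ i < σ k ∧ i < k)
          = (Finset.univ.filter fun k : Fin n =>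
              i.1 < k.1 ∧ (σ i).1 < (σ k).1 ∧ (σ k).1 < s) := by
        ext k
        simp only [Finset.mem_filter, Finset.mem_univ, true_and, Fin.lt_def]
        have h1 := hlt_iff (σ k) i
        constructor
        · rintro ⟨h2, h3, h4⟩
          exact ⟨h4, h3, h1.1 h2⟩
        · rintro ⟨h2, h3, h4⟩
          exact ⟨h1.2 h4, h3, h2⟩
      rw [hLs, hAs, hBs]
      -- counting equations
      have q1 : (Finset.univ.filter fun k : Fin n => k.1 < i.1 ∧ (σ k).1 < s).card
          + (Finset.univ.filter fun k : Fin n => k.1 < i.1 ∧ ¬ (σ k).1 < s).card = i.1 := by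
        have h := Finset.card_filter_add_card_filter_not
          (s := Finset.univ.filter fun k : Fin n => k.1 < i.1) (p := fun k => (σ k).1 < s)
        rw [Finset.filter_filter, Finset.filter_filter,
          NplusAux.card_val_lt (le_of_lt i.2)] at h
        exact h
      have hT : (Finset.univ.filter fun k : Fin n => (σ k).1 < s).card = s :=
        (NplusAux.card_filter_perm σ (fun v : Fin n => v.1 < s)).trans
          (NplusAux.card_val_lt hs_n)
      have q2 : (Finset.univ.filter fun k : Fin n => k.1 < i.1 ∧ (σ k).1 < s).card
          + (Finset.univ.filter fun k : Fin n => (σ k).1 < s ∧ ¬ k.1 < i.1).card = s := by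
        have h := Finset.card_filter_add_card_filter_not
          (s := Finset.univ.filter fun k : Fin n => (σ k).1 < s) (p := fun k => k.1 < i.1)
        rw [Finset.filter_filter, Finset.filter_filter, hT] at h
        have e : (Finset.univ.filter fun k : Fin n => (σ k).1 < s ∧ k.1 < i.1)
            = (Finset.univ.filter fun k : Fin n => k.1 < i.1 ∧ (σ k).1 < s) := by
          ext k
          simp only [Finset.mem_filter, Finset.mem_univ, true_and]
          tauto
        rw [e] at h
        exact h
      have q3 : (Finset.univ.filter fun k : Fin n => (σ k).1 < s ∧ ¬ k.1 < i.1).card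
          = (Finset.univ.filter fun k : Fin n => i.1 < k.1 ∧ (σ k).1 < s).card + 1 := by
        have h := Finset.card_filter_add_card_filter_not
          (s := Finset.univ.filter fun k : Fin n => (σ k).1 < s ∧ ¬ k.1 < i.1)
          (p := fun k => i.1 < k.1)
        rw [Finset.filter_filter, Finset.filter_filter] at h
        have e1 : (Finset.univ.filter fun k : Fin n => ((σ k).1 < s ∧ ¬ k.1 < i.1) ∧ i.1 < k.1)
            = (Finset.univ.filter fun k : Fin n => i.1 < k.1 ∧ (σ k).1 < s) := by
          ext k
          simp only [Finset.mem_filter, Finset.mem_univ, true_and]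
          omega
        have e2 : (Finset.univ.filter fun k : Fin n =>
              ((σ k).1 < s ∧ ¬ k.1 < i.1) ∧ ¬ i.1 < k.1) = {i} := by
          ext k
          simp only [Finset.mem_filter, Finset.mem_univ, true_and, Finset.mem_singleton]
          constructor
          · rintro ⟨⟨h1, h2⟩, h3⟩
            exact Fin.ext (by omega)
          · rintro rfl
            exact ⟨⟨hσs, by omega⟩, by omega⟩
        rw [e1, e2, Finset.card_singleton] at h
        omega
      have q4 : (Finset.univ.filter fun k : Fin n => i.1 < k.1 ∧ (σ k).1 < s).card
          = (Finset.univ.filter fun k : Fin n =>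
              i.1 < k.1 ∧ (σ i).1 < (σ k).1 ∧ (σ k).1 < s).card
            + (Finset.univ.filter fun k : Fin n => i.1 < k.1 ∧ (σ k).1 < (σ i).1).card := by
        have h := Finset.card_filter_add_card_filter_not
          (s := Finset.univ.filter fun k : Fin n => i.1 < k.1 ∧ (σ k).1 < s)
          (p := fun k => (σ i).1 < (σ k).1)
        rw [Finset.filter_filter, Finset.filter_filter] at h
        have e1 : (Finset.univ.filter fun k : Fin n =>
              (i.1 < k.1 ∧ (σ k).1 < s) ∧ (σ i).1 < (σ k).1)
            = (Finset.univ.filter fun k : Fin n =>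
              i.1 < k.1 ∧ (σ i).1 < (σ k).1 ∧ (σ k).1 < s) := by
          ext k
          simp only [Finset.mem_filter, Finset.mem_univ, true_and]
          omega
        have e2 : (Finset.univ.filter fun k : Fin n =>
              (i.1 < k.1 ∧ (σ k).1 < s) ∧ ¬ (σ i).1 < (σ k).1)
            = (Finset.univ.filter fun k : Fin n => i.1 < k.1 ∧ (σ k).1 < (σ i).1) := by
          ext k
          simp only [Finset.mem_filter, Finset.mem_univ, true_and]
          rcases eq_or_ne k i with rfl | hne
          · omega
          · have hv : (σ k).1 ≠ (σ i).1 := fun hh => hne (σ.injective (Fin.val_injective hh))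
            omega
        rw [e1, e2] at h
        omega
      have q5 : (Finset.univ.filter fun a : Fin n => ¬ a.1 < s ∧ (σ a).1 < (σ i).1).card
          = (Finset.univ.filter fun a : Fin n => a.1 < i.1 ∧ ¬ a.1 < s).card
            + (Finset.univ.filter fun k : Fin n => i.1 < k.1 ∧ (σ k).1 < (σ i).1).card := by
        have h := Finset.card_filter_add_card_filter_not
          (s := Finset.univ.filter fun a : Fin n => ¬ a.1 < s ∧ (σ a).1 < (σ i).1)
          (p := fun a => a.1 < i.1)
        rw [Finset.filter_filter, Finset.filter_filter] at h
        have e1 : (Finset.univ.filter fun a : Fin n =>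
              (¬ a.1 < s ∧ (σ a).1 < (σ i).1) ∧ a.1 < i.1)
            = (Finset.univ.filter fun a : Fin n => a.1 < i.1 ∧ ¬ a.1 < s) := by
          ext a
          simp only [Finset.mem_filter, Finset.mem_univ, true_and]
          constructor
          · rintro ⟨⟨h1, h2⟩, h3⟩
            exact ⟨h3, h1⟩
          · rintro ⟨h1, h2⟩
            exact ⟨⟨h2, hinc a (by omega) h1⟩, h1⟩
        have e2 : (Finset.univ.filter fun a : Fin n =>
              (¬ a.1 < s ∧ (σ a).1 < (σ i).1) ∧ ¬ a.1 < i.1)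
            = (Finset.univ.filter fun k : Fin n => i.1 < k.1 ∧ (σ k).1 < (σ i).1) := by
          ext a
          simp only [Finset.mem_filter, Finset.mem_univ, true_and]
          rcases eq_or_ne a i with rfl | hne
          · omega
          · have hv : a.1 ≠ i.1 := fun hh => hne (Fin.val_injective hh)
            omega
        rw [e1, e2] at h
        omega
      have q6 : s + (Finset.univ.filter fun a : Fin n => a.1 < i.1 ∧ ¬ a.1 < s).card
          = i.1 := by
        have h := Finset.card_filter_add_card_filter_not
          (s := Finset.univ.filter fun a : Fin n => a.1 < i.1) (p := fun a => a.1 < s)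
        rw [Finset.filter_filter, Finset.filter_filter,
          NplusAux.card_val_lt (le_of_lt i.2)] at h
        have e1 : (Finset.univ.filter fun a : Fin n => a.1 < i.1 ∧ a.1 < s)
            = (Finset.univ.filter fun a : Fin n => a.1 < s) := by
          ext a
          simp only [Finset.mem_filter, Finset.mem_univ, true_and]
          omega
        rw [e1, NplusAux.card_val_lt hs_n] at h
        omega
      omega
    · rw [if_neg hsp]
      have e1 : (Finset.univ.filter fun k : Fin n =>
            σ i < σ k ∧ k < i ∧ blk r η i.1 ≤ blk r η ((σ k).1) ∧
              blk r η ((σ i).1) < blk r η i.1) = ∅ :=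
        Finset.filter_false_of_mem (fun k _ h => hsp h.2.2.2)
      have e2 : (Finset.univ.filter fun a : Fin n =>
            σ a < σ i ∧ blk r η ((σ a).1) < blk r η a.1 ∧
              blk r η ((σ i).1) < blk r η i.1 ∧ blk r η i.1 ≤ blk r η a.1) = ∅ :=
        Finset.filter_false_of_mem (fun a _ h => hsp h.2.2.1)
      have e3 : (Finset.univ.filter fun k : Fin n =>
            blk r η ((σ k).1) < blk r η i.1 ∧ σ i < σ k ∧ i < k) = ∅ :=
        Finset.filter_false_of_mem (fun k _ h => hsp
          (lt_of_le_of_lt (NplusAux.blk_mono r η (le_of_lt (Fin.lt_def.1 h.2.1))) h.1))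
      rw [e1, e2, e3]
      simp
  -- Rewrite all four quantities as sums over `i : Fin n`
  have hLHS : (Finset.univ.filter (fun p : Fin n × Fin n =>
        σ p.1 < p.2 ∧ σ⁻¹ p.2 < p.1 ∧ blk r η p.1.1 ≤ blk r η p.2.1 ∧
          blk r η ((σ p.1).1) < blk r η p.1.1)).card
      = ∑ i : Fin n, (Finset.univ.filter fun k : Fin n =>
          σ i < σ k ∧ k < i ∧ blk r η i.1 ≤ blk r η ((σ k).1) ∧
            blk r η ((σ i).1) < blk r η i.1).card := by
    rw [Finset.card_filter, ← Finset.univ_product_univ, Finset.sum_product]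
    refine Finset.sum_congr rfl fun i _ => ?_
    exact NplusAux.sum_ite_eq_card_filter_perm σ
      (fun j => σ i < j ∧ σ⁻¹ j < i ∧ blk r η i.1 ≤ blk r η j.1 ∧
        blk r η ((σ i).1) < blk r η i.1)
      (fun k => σ i < σ k ∧ k < i ∧ blk r η i.1 ≤ blk r η ((σ k).1) ∧
        blk r η ((σ i).1) < blk r η i.1)
      (fun k => by simp)
  have himv : imvE r η n (wordOf r η n σ)
      = ∑ i : Fin n, (Finset.univ.filter fun a : Fin n =>
          σ a < σ i ∧ blk r η ((σ a).1) < blk r η a.1 ∧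
            blk r η ((σ i).1) < blk r η i.1 ∧ blk r η i.1 ≤ blk r η a.1).card := by
    unfold imvE wordOf
    rw [Finset.card_filter, ← Finset.univ_product_univ, Finset.sum_product_right]
    refine (Fintype.sum_equiv σ _ _ fun i => ?_).symm
    refine (NplusAux.sum_ite_eq_card_filter_perm σ
      (fun x => x < σ i ∧ blk r η x.1 < blk r η ((σ⁻¹ x).1) ∧
        blk r η ((σ i).1) < blk r η ((σ⁻¹ (σ i)).1) ∧
          blk r η ((σ⁻¹ (σ i)).1) ≤ blk r η ((σ⁻¹ x).1))
      (fun a => σ a < σ i ∧ blk r η ((σ a).1) < blk r η a.1 ∧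
        blk r η ((σ i).1) < blk r η i.1 ∧ blk r η i.1 ≤ blk r η a.1)
      (fun a => by simp)).symm
  have hNm : (Nminus r η n σ).card
      = ∑ i : Fin n, (Finset.univ.filter fun k : Fin n =>
          blk r η ((σ k).1) < blk r η i.1 ∧ σ i < σ k ∧ i < k).card := by
    unfold Nminus
    rw [Finset.card_filter, ← Finset.univ_product_univ, Finset.sum_product]
    refine Finset.sum_congr rfl fun i _ => ?_
    exact NplusAux.sum_ite_eq_card_filter_perm σ
      (fun j => blk r η j.1 < blk r η i.1 ∧ σ i < j ∧ i < σ⁻¹ j)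
      (fun k => blk r η ((σ k).1) < blk r η i.1 ∧ σ i < σ k ∧ i < k)
      (fun k => by simp)
  have hiexc : iexc r η n σ
      = ∑ i : Fin n, (if blk r η ((σ i).1) < blk r η i.1 then 1 else 0) := by
    unfold iexc Iset
    rw [Finset.card_filter]
    refine (Fintype.sum_equiv σ
      (fun i => if blk r η ((σ i).1) < blk r η i.1 then (1 : ℕ) else 0)
      (fun j => if blk r η j.1 < blk r η ((σ⁻¹ j).1) then (1 : ℕ) else 0)
      (fun i => by simp)).symm
  rw [hLHS, himv, hNm, hiexc, ← Finset.sum_add_distrib, ← Finset.sum_add_distrib]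
  exact Finset.sum_congr rfl fun i _ => key i
end
end

section
/- For every η-admissible permutation σ, den(σ) = denh(π_η(σ^{-1})); that is, Denert's statistic of σ equals Han's Denert statistic of the associated multiset permutation. -/
open Finset

noncomputable section
open scoped Classical

/-!
Write `w = π_η(σ⁻¹)` and `b = π_η`, so that `w (σ i) = b i`. Admissibility makes `σ`
increasing on each block of `η`, hence for `σ i < j` the condition `σ⁻¹ j < i` of `N⁺_σ`
and `N⁻_σ` says `w j < b i = w (σ i)`. Substituting `a = σ i` turns `|N⁺_σ| - |N⁻_σ|`
into `inv w - #{a < j | b j < w a}`.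

Split the inversions `(a, j)` of `w` according to whether `a` is an excedance. If it is
not, neither is `j` (as `w j < w a ≤ b a ≤ b j`), and these are the inversions of `N(w)`.
If it is, count `#{j | w j < w a} = #{j | b j < w a}` (`w` is a rearrangement of `b`) on
either side of `a`: all `j ≤ a` have `b j < w a`, and a `j < a` with `w j ≥ w a` is an
excedance, so `#{j > a | w j < w a} = #{j > a | b j < w a} + 1 + #{j < a ∈ Exc(w) | w a ≤ w j}`.
Summed over `a` the last term is `imv(E(w))` and the `1`s give `exc(w)`, which cancels the
`- iexc(σ)` of `den`.
-/

section Finset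
variable {α β : Type*} [Fintype α] [Fintype β]

theorem card_filter_and_add_card_filter_and_not (p q : α → Prop) [DecidablePred p]
    [DecidablePred q] : #{x | p x ∧ q x} + #{x | p x ∧ ¬ q x} = #{x | p x} := by
  rw [← card_filter_add_card_filter_not (s := {x | p x}) q, filter_filter, filter_filter]

theorem card_filter_and_add_card_filter_not_and (p q : α → Prop) [DecidablePred p]
    [DecidablePred q] : #{x | p x ∧ q x} + #{x | ¬ p x ∧ q x} = #{x | q x} := by
  simpa only [and_comm] using card_filter_and_add_card_filter_and_not q p

theorem card_filter_prod_eq_sum_fst (P : α × β → Prop) [DecidablePred P] :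
    #{p | P p} = ∑ a, #{b | P (a, b)} := by
  simp only [card_filter, Fintype.sum_prod_type]

theorem card_filter_prod_eq_sum_snd (P : α × β → Prop) [DecidablePred P] :
    #{p | P p} = ∑ b, #{a | P (a, b)} := by
  simp only [card_filter, Fintype.sum_prod_type_right]

end Finset

section Denert
variable {n r : ℕ} {η : ℕ → ℕ} {σ : Equiv.Perm (Fin n)}

theorem blk_mono : Monotone (blk r η) := fun _ _ hij =>
  card_le_card fun _ hk => by
    simp only [mem_filter] at hk ⊢
    exact ⟨hk.1, hk.2.trans hij⟩

theorem card_wordOf_lt (σ : Equiv.Perm (Fin n)) (v : ℕ) :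
    #{j | wordOf r η n σ j < v} = #{i : Fin n | blk r η i < v} :=
  card_equiv σ⁻¹ fun j => by simp only [mem_filter, mem_univ, true_and]; rfl

theorem wordOf_apply_self (σ : Equiv.Perm (Fin n)) (i : Fin n) :
    wordOf r η n σ (σ i) = blk r η i := by
  simp [wordOf]

namespace admissible

theorem lt_of_blk_eq (hσ : admissible r η n σ) {a c : Fin n} (hac : a < c)
    (heq : blk r η a = blk r η c) : σ a < σ c := by
  obtain ⟨c, hc⟩ := c
  induction c with
  | zero => exact (Nat.not_lt_zero _ hac).elim
  | succ k ih =>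
    have hk : k < n := by omega
    have hak : a.1 ≤ k := Nat.lt_succ_iff.mp hac
    have hblk : blk r η k = blk r η (k + 1) :=
      le_antisymm (blk_mono k.le_succ) (heq ▸ blk_mono hak)
    have step : σ ⟨k, hk⟩ < σ ⟨k + 1, hc⟩ := by
      refine lt_of_le_of_ne (not_lt.mp fun h => (hσ ⟨k, hk⟩ hc h).ne hblk) ?_
      exact fun h => by simpa using σ.injective h
    rcases hak.lt_or_eq with hlt | rfl
    · exact (ih hk hlt (heq.trans hblk.symm)).trans step
    · exact step

theorem inv_lt_iff (hσ : admissible r η n σ) {i j : Fin n} (hij : σ i < j) :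
    σ⁻¹ j < i ↔ wordOf r η n σ j < blk r η i := by
  refine ⟨fun h => (blk_mono h.le).lt_of_ne fun heq => ?_, blk_mono.reflect_lt⟩
  exact (hσ.lt_of_blk_eq h heq).not_gt (by simpa using hij)

theorem lt_inv_iff (hσ : admissible r η n σ) {i j : Fin n} (hij : σ i < j) :
    i < σ⁻¹ j ↔ blk r η i ≤ wordOf r η n σ j := by
  have hne : σ⁻¹ j ≠ i := fun h => hij.ne (by rw [← h]; simp)
  rw [← not_le, hne.le_iff_lt, hσ.inv_lt_iff hij, not_lt]

end admissible

theorem card_Nplus (hσ : admissible r η n σ) :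
    #(Nplus r η n σ) = #{p : Fin n × Fin n | (p.1 < p.2 ∧
      wordOf r η n σ p.2 < wordOf r η n σ p.1) ∧ ¬ blk r η p.2 < wordOf r η n σ p.1} := by
  refine card_equiv (Equiv.prodCongr σ (Equiv.refl _)) fun ⟨i, j⟩ => ?_
  simp only [Nplus, mem_filter, mem_univ, true_and, Equiv.prodCongr_apply, Prod.map,
    Equiv.refl_apply, wordOf_apply_self, not_lt]
  constructor
  · rintro ⟨hb, hij, hinv⟩
    exact ⟨⟨hij, (hσ.inv_lt_iff hij).mp hinv⟩, hb⟩
  · rintro ⟨⟨hij, hw⟩, hb⟩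
    exact ⟨hb, hij, (hσ.inv_lt_iff hij).mpr hw⟩

theorem card_Nminus (hσ : admissible r η n σ) :
    #(Nminus r η n σ) = #{p : Fin n × Fin n | (p.1 < p.2 ∧
      blk r η p.2 < wordOf r η n σ p.1) ∧ ¬ wordOf r η n σ p.2 < wordOf r η n σ p.1} := by
  refine card_equiv (Equiv.prodCongr σ (Equiv.refl _)) fun ⟨i, j⟩ => ?_
  simp only [Nminus, mem_filter, mem_univ, true_and, Equiv.prodCongr_apply, Prod.map,
    Equiv.refl_apply, wordOf_apply_self, not_lt]
  constructor
  · rintro ⟨hb, hij, hinv⟩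
    exact ⟨⟨hij, hb⟩, (hσ.lt_inv_iff hij).mp hinv⟩
  · rintro ⟨⟨hij, hb⟩, hw⟩
    exact ⟨hb, hij, (hσ.lt_inv_iff hij).mpr hw⟩

theorem card_smaller_after_exceedance (σ : Equiv.Perm (Fin n)) {a : Fin n}
    (ha : blk r η a < wordOf r η n σ a) :
    #{j | a < j ∧ wordOf r η n σ j < wordOf r η n σ a}
      = #{j | a < j ∧ blk r η j < wordOf r η n σ a} + 1
        + #{j | j < a ∧ blk r η j < wordOf r η n σ j ∧ wordOf r η n σ a ≤ wordOf r η n σ j} := by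
  set w := wordOf r η n σ
  set v := w a
  have hw := card_filter_and_add_card_filter_not_and (a < ·) (w · < v)
  have hb := card_filter_and_add_card_filter_not_and (a < ·) (blk r η · < v)
  have hle := card_filter_and_add_card_filter_and_not (¬ a < ·) (w · < v)
  have hblk : #{j | ¬ a < j ∧ blk r η j < v} = #{j | ¬ a < j} :=
    congrArg card <| filter_congr fun j _ =>
      and_iff_left_of_imp fun hj => (blk_mono (not_lt.mp hj)).trans_lt ha
  have hIic : #{j | ¬ a < j} = a + 1 := by
    rw [← Fin.card_Iic]
    congr 1
    ext
    simp
  have hinsert : #{j | ¬ a < j ∧ ¬ w j < v} = #{j | j < a ∧ blk r η j < w j ∧ v ≤ w j} + 1 := by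
    rw [← card_insert_of_notMem (s := {j | j < a ∧ _}) (a := a) (by simp)]
    congr 1
    ext j
    simp only [mem_filter, mem_univ, true_and, mem_insert, not_lt]
    constructor
    · rintro ⟨hja, hvj⟩
      rcases hja.lt_or_eq with hja | rfl
      · exact .inr ⟨hja, (blk_mono hja.le).trans_lt (ha.trans_le hvj), hvj⟩
      · exact .inl rfl
    · rintro (rfl | ⟨hja, -, hvj⟩)
      · exact ⟨le_rfl, le_rfl⟩
      · exact ⟨hja.le, hvj⟩
  rw [card_wordOf_lt σ v] at hw
  omega

theorem card_exceedance_inversions_fiber (σ : Equiv.Perm (Fin n)) (a : Fin n) :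
    #{j | (a < j ∧ wordOf r η n σ j < wordOf r η n σ a) ∧ blk r η a < wordOf r η n σ a}
      = #{j | a < j ∧ blk r η j < wordOf r η n σ a}
        + (if blk r η a < wordOf r η n σ a then 1 else 0)
        + #{j | j < a ∧ blk r η j < wordOf r η n σ j ∧ blk r η a < wordOf r η n σ a ∧
            wordOf r η n σ a ≤ wordOf r η n σ j} := by
  by_cases ha : blk r η a < wordOf r η n σ a
  · simpa only [ha, and_true, true_and, if_true] using card_smaller_after_exceedance σ ha
  · have hX : #{j | a < j ∧ blk r η j < wordOf r η n σ a} = 0 :=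
      card_eq_zero.mpr <| filter_eq_empty_iff.mpr fun j _ ⟨hj, hlt⟩ =>
        ha ((blk_mono hj.le).trans_lt hlt)
    simp [ha, hX]

theorem card_inversions_wordOf (σ : Equiv.Perm (Fin n)) :
    #{p : Fin n × Fin n | p.1 < p.2 ∧ wordOf r η n σ p.2 < wordOf r η n σ p.1}
      = #{p : Fin n × Fin n | p.1 < p.2 ∧ blk r η p.2 < wordOf r η n σ p.1}
        + #(excSet r η n (wordOf r η n σ)) + imvE r η n (wordOf r η n σ)
        + invN r η n (wordOf r η n σ) := by
  set w := wordOf r η n σ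
  have hsplit := card_filter_and_add_card_filter_and_not
    (fun p : Fin n × Fin n => p.1 < p.2 ∧ w p.2 < w p.1) (fun p => blk r η p.1 < w p.1)
  have hexc : #{p : Fin n × Fin n | (p.1 < p.2 ∧ w p.2 < w p.1) ∧ blk r η p.1 < w p.1}
      = #{p : Fin n × Fin n | p.1 < p.2 ∧ blk r η p.2 < w p.1} + #(excSet r η n w)
        + imvE r η n w := by
    rw [card_filter_prod_eq_sum_fst, card_filter_prod_eq_sum_fst, excSet, card_filter, imvE,
      card_filter_prod_eq_sum_snd, ← sum_add_distrib, ← sum_add_distrib]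
    exact sum_congr rfl fun a _ => card_exceedance_inversions_fiber σ a
  have hnonexc : #{p : Fin n × Fin n | (p.1 < p.2 ∧ w p.2 < w p.1) ∧ ¬ blk r η p.1 < w p.1}
      = invN r η n w :=
    congrArg card <| filter_congr fun p _ => by
      constructor
      · rintro ⟨⟨hp, hw⟩, hexc⟩
        exact ⟨hp, hexc, fun h => hexc ((blk_mono hp.le).trans_lt (h.trans hw)), hw⟩
      · rintro ⟨hp, hexc, -, hw⟩
        exact ⟨⟨hp, hw⟩, hexc⟩
  omega

theorem card_Nplus_sub_card_Nminus (hσ : admissible r η n σ) :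
    (#(Nplus r η n σ) : ℤ) - #(Nminus r η n σ)
      = #{p : Fin n × Fin n | p.1 < p.2 ∧ wordOf r η n σ p.2 < wordOf r η n σ p.1}
        - #{p : Fin n × Fin n | p.1 < p.2 ∧ blk r η p.2 < wordOf r η n σ p.1} := by
  rw [card_Nplus hσ, card_Nminus hσ]
  set w := wordOf r η n σ
  have hinv := card_filter_and_add_card_filter_and_not
    (fun p : Fin n × Fin n => p.1 < p.2 ∧ w p.2 < w p.1) (fun p => blk r η p.2 < w p.1)
  have hX := card_filter_and_add_card_filter_and_not
    (fun p : Fin n × Fin n => p.1 < p.2 ∧ blk r η p.2 < w p.1) (fun p => w p.2 < w p.1)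
  have hboth : #{p : Fin n × Fin n | (p.1 < p.2 ∧ w p.2 < w p.1) ∧ blk r η p.2 < w p.1}
      = #{p : Fin n × Fin n | (p.1 < p.2 ∧ blk r η p.2 < w p.1) ∧ w p.2 < w p.1} :=
    congrArg card <| filter_congr fun _ _ => and_right_comm
  omega

end Denert

theorem den_eq_denh_general (n r : ℕ) (η : ℕ → ℕ)
    (σ : Equiv.Perm (Fin n)) (hσ : admissible r η n σ) :
    den r η n σ = (denh r η n (wordOf r η n σ) : ℤ) := by
  have hN := card_Nplus_sub_card_Nminus hσ
  have hinv := card_inversions_wordOf (r := r) (η := η) σ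
  have hI : Iset r η n σ = excSet r η n (wordOf r η n σ) := rfl
  simp only [den, denh, iexc, hI]
  push_cast
  omega

/-- for `η`-admissible `σ`, `den(σ) = denh(π_η(σ⁻¹))`. -/
theorem den_eq_denh (n r : ℕ) (η : ℕ → ℕ)
    (hpos : ∀ k < r, 0 < η k) (hsum : ∑ k ∈ Finset.range r, η k = n)
    (σ : Equiv.Perm (Fin n)) (hσ : admissible r η n σ) :
    den r η n σ = (denh r η n (wordOf r η n σ) : ℤ) :=
  den_eq_denh_general n r η σ hσ
end
end

section
/- For σ ∈ D_n, dden(σ) = denh(|σ|) + nsp(σ), where nsp(σ) = |{(i,j) : 1 ≤ i < j ≤ n, σ(i) + σ(j) < 0}| is the number of negative sum pairs; i.e., −Σ_{i∈DNeg(σ)} σ(i) − dneg(σ) = nsp(σ). -/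
open Finset

noncomputable section
open scoped Classical

/-- A signed permutation of `[n]` in window notation: an unsigned permutation together with
a sign vector; the window entry at `i` is `±(p i + 1)` (1-based values in `±{1,…,n}`). -/
abbrev SignedPerm (n : ℕ) := Equiv.Perm (Fin n) × (Fin n → Bool)

/-- The window entry `σ(i) ∈ ℤ` of a signed permutation. -/
def win {n : ℕ} (σ : SignedPerm n) (i : Fin n) : ℤ :=
  if σ.2 i then -(((σ.1 i).1 : ℤ) + 1) else ((σ.1 i).1 : ℤ) + 1

/-- `neg(σ) = #{i : σ(i) < 0}`. -/
def negc {n : ℕ} (σ : SignedPerm n) : ℕ :=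
  (Finset.univ.filter (fun i => win σ i < 0)).card

/-- Type `A` descent set of the window. -/
def desSetB {n : ℕ} (σ : SignedPerm n) : Finset (Fin n) :=
  Finset.univ.filter (fun i => ∃ h : i.1 + 1 < n, win σ ⟨i.1 + 1, h⟩ < win σ i)

/-- Type `A` descent number of the window. -/
def desB {n : ℕ} (σ : SignedPerm n) : ℕ := (desSetB σ).card

/-- Type `A` major index of the window (1-based positions). -/
def majB {n : ℕ} (σ : SignedPerm n) : ℕ := ∑ i ∈ desSetB σ, (i.1 + 1)

/-- Excedance set of an (unsigned) permutation. -/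
def excSetP {n : ℕ} (p : Equiv.Perm (Fin n)) : Finset (Fin n) :=
  Finset.univ.filter (fun i => i.1 < (p i).1)

/-- Excedance number of a permutation. -/
def excP {n : ℕ} (p : Equiv.Perm (Fin n)) : ℕ := (excSetP p).card

/-- Han's/Denert's statistic on `S_n`:
`denh(p) = Σ_{i∈Exc(p)} i + inv(E(p)) + inv(N(p))`. -/
def denhP {n : ℕ} (p : Equiv.Perm (Fin n)) : ℕ :=
  (∑ i ∈ excSetP p, (i.1 + 1)) +
    (Finset.univ.filter (fun q : Fin n × Fin n => q.1 < q.2 ∧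
      q.1.1 < (p q.1).1 ∧ q.2.1 < (p q.2).1 ∧ p q.2 < p q.1)).card +
    (Finset.univ.filter (fun q : Fin n × Fin n => q.1 < q.2 ∧
      ¬ q.1.1 < (p q.1).1 ∧ ¬ q.2.1 < (p q.2).1 ∧ p q.2 < p q.1)).card

/-- `ndes(σ) = des(σ) + neg(σ)`. -/
def ndes {n : ℕ} (σ : SignedPerm n) : ℕ := desB σ + negc σ

/-- `nmaj(σ) = maj(σ) − Σ_{σ(i)<0} σ(i)`. -/
def nmaj {n : ℕ} (σ : SignedPerm n) : ℤ :=
  (majB σ : ℤ) - ∑ i ∈ Finset.univ.filter (fun i => win σ i < 0), win σ i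

/-- `fdes(σ) = 2des(σ) + [σ(1)<0]`. -/
def fdes {n : ℕ} (σ : SignedPerm n) : ℕ :=
  2 * desB σ + (if h : 0 < n then (if win σ ⟨0, h⟩ < 0 then 1 else 0) else 0)

/-- `fmaj(σ) = 2maj(σ) + neg(σ)`. -/
def fmaj {n : ℕ} (σ : SignedPerm n) : ℕ := 2 * majB σ + negc σ

/-- Absolute excedance number `excabs(σ) = exc(|σ|) + neg(σ)`. -/
def excabs {n : ℕ} (σ : SignedPerm n) : ℕ := excP σ.1 + negc σ

/-- Negative Denert statistic `nden(σ) = denh(|σ|) − Σ_{σ(i)<0} σ(i)`. -/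
def nden {n : ℕ} (σ : SignedPerm n) : ℤ :=
  (denhP σ.1 : ℤ) - ∑ i ∈ Finset.univ.filter (fun i => win σ i < 0), win σ i

/-- `DNeg(σ) = {i : σ(i) < −1}`. -/
def dnegSet {n : ℕ} (σ : SignedPerm n) : Finset (Fin n) :=
  Finset.univ.filter (fun i => win σ i < -1)

def dneg {n : ℕ} (σ : SignedPerm n) : ℕ := (dnegSet σ).card

/-- `ddes(σ) = des(σ) + dneg(σ)`. -/
def ddes {n : ℕ} (σ : SignedPerm n) : ℕ := desB σ + dneg σ

/-- `dmaj(σ) = maj(σ) − Σ_{i∈DNeg(σ)} σ(i) − dneg(σ)`. -/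
def dmaj {n : ℕ} (σ : SignedPerm n) : ℤ :=
  (majB σ : ℤ) - (∑ i ∈ dnegSet σ, win σ i) - dneg σ

/-- `dexc(σ) = exc(|σ|) + dneg(σ)`. -/
def dexc {n : ℕ} (σ : SignedPerm n) : ℕ := excP σ.1 + dneg σ

/-- `dden(σ) = denh(|σ|) − Σ_{i∈DNeg(σ)} σ(i) − dneg(σ)`. -/
def dden {n : ℕ} (σ : SignedPerm n) : ℤ :=
  (denhP σ.1 : ℤ) - (∑ i ∈ dnegSet σ, win σ i) - dneg σ

/-- Number of negative sum pairs: `nsp(σ) = #{(i,j) : i < j, σ(i) + σ(j) < 0}`. -/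
def nsp {n : ℕ} (σ : SignedPerm n) : ℕ :=
  (Finset.univ.filter (fun p : Fin n × Fin n => p.1 < p.2 ∧ win σ p.1 + win σ p.2 < 0)).card

/-! If `|σ(j)| < |σ(i)|`, then `σ(i) + σ(j)` has the sign of `σ(i)`. Orienting every pair by
absolute value therefore makes `nsp(σ)` count, for each negative entry `σ(i)`, the `|σ(i)| - 1`
positions whose entries are smaller in absolute value. Entries equal to `-1` contribute nothing,
which leaves `Σ_{i ∈ DNeg(σ)} (-σ(i) - 1)`. -/

theorem card_filter_lt_comp_eq_of_injective {α β γ : Type*} [Fintype α] [LinearOrder β]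
    [LinearOrder γ] {f : α → β} {g : α → γ} (hf : Function.Injective f)
    (hg : Function.Injective g) {S : α → α → Prop} [DecidableRel S]
    (hS : ∀ a b, S a b → S b a) :
    #{q : α × α | f q.1 < f q.2 ∧ S q.1 q.2} = #{q : α × α | g q.1 < g q.2 ∧ S q.1 q.2} := by
  refine card_nbij' (fun q => if g q.1 < g q.2 then q else q.swap)
    (fun q => if f q.1 < f q.2 then q else q.swap) ?_ ?_ ?_ ?_
  all_goals
    rintro ⟨a, b⟩ h
    have := @hf a b; have := @hg a b; have := hS a b
    simp only [coe_filter, Set.mem_ofPred_eq] at h ⊢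
    grind

theorem Equiv.Perm.card_filter_apply_lt {n : ℕ} (p : Equiv.Perm (Fin n)) (k : Fin n) :
    #{j | p j < k} = k := by
  rw [card_equiv p (t := Iio k) (by simp), Fin.card_Iio]

section SignedPerm

variable {n : ℕ} (σ : SignedPerm n)

theorem win_neg_iff (i : Fin n) : win σ i < 0 ↔ σ.2 i := by
  unfold win; split_ifs <;> simp_all <;> omega

theorem coe_apply_eq_neg_win_sub_one {i : Fin n} (h : win σ i < 0) :
    ((σ.1 i : ℕ) : ℤ) = -win σ i - 1 := by
  simp [win, (win_neg_iff σ i).mp h]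

theorem win_add_win_neg_iff_of_lt {i j : Fin n} (h : σ.1 j < σ.1 i) :
    win σ i + win σ j < 0 ↔ win σ i < 0 := by
  rw [Fin.lt_def] at h
  unfold win; split_ifs <;> omega

theorem nsp_eq_card_filter_apply_lt_win_neg :
    nsp σ = #{q : Fin n × Fin n | σ.1 q.2 < σ.1 q.1 ∧ win σ q.1 < 0} := by
  rw [nsp]
  refine (card_filter_lt_comp_eq_of_injective (f := id) (g := OrderDual.toDual ∘ σ.1)
    (S := fun i j => win σ i + win σ j < 0) Function.injective_id
    (OrderDual.toDual.injective.comp σ.1.injective) (fun _ _ h => by linarith)).trans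
    (congrArg card (filter_congr fun q _ => ?_))
  simp only [Function.comp_apply, OrderDual.toDual_lt_toDual]
  exact and_congr_right (win_add_win_neg_iff_of_lt σ)

theorem nsp_eq_sum_win_neg : nsp σ = ∑ i with win σ i < 0, (σ.1 i : ℕ) := by
  rw [nsp_eq_card_filter_apply_lt_win_neg, card_filter, Fintype.sum_prod_type, sum_filter]
  refine sum_congr rfl fun i _ => ?_
  split_ifs with h
  · simp [h, Equiv.Perm.card_filter_apply_lt]
  · simp [h]

theorem nsp_eq_sum_dnegSet : (nsp σ : ℤ) = ∑ i ∈ dnegSet σ, (-win σ i - 1) := by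
  have hsub : dnegSet σ ⊆ ({i | win σ i < 0} : Finset (Fin n)) :=
    monotone_filter_right _ fun i h => by omega
  calc (nsp σ : ℤ) = ∑ i with win σ i < 0, (-win σ i - 1) := by
        rw [nsp_eq_sum_win_neg, Nat.cast_sum]
        exact sum_congr rfl fun i hi => coe_apply_eq_neg_win_sub_one σ (mem_filter.mp hi).2
    _ = ∑ i ∈ dnegSet σ, (-win σ i - 1) := by
        refine (sum_subset hsub fun i hi hi' => ?_).symm
        simp only [dnegSet, mem_filter, mem_univ, true_and] at hi hi'
        omega

end SignedPerm

theorem dden_eq_denh_add_nsp_general (n : ℕ) (σ : SignedPerm n) :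
    dden σ = (denhP σ.1 : ℤ) + nsp σ ∧
      -(∑ i ∈ dnegSet σ, win σ i) - (dneg σ : ℤ) = nsp σ := by
  have hnsp : -(∑ i ∈ dnegSet σ, win σ i) - (dneg σ : ℤ) = nsp σ := by
    rw [nsp_eq_sum_dnegSet, sum_sub_distrib, sum_neg_distrib, dneg, card_eq_sum_ones,
      Nat.cast_sum, Nat.cast_one]
  exact ⟨by rw [dden]; linarith, hnsp⟩

/-- for `σ ∈ D_n`, `dden(σ) = denh(|σ|) + nsp(σ)`; equivalently
`−Σ_{i∈DNeg(σ)} σ(i) − dneg(σ) = nsp(σ)`. -/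
theorem dden_eq_denh_add_nsp (n : ℕ) (σ : SignedPerm n) (hσ : Even (negc σ)) :
    dden σ = (denhP σ.1 : ℤ) + nsp σ ∧
      -(∑ i ∈ dnegSet σ, win σ i) - (dneg σ : ℤ) = nsp σ :=
  dden_eq_denh_add_nsp_general n σ
end
end

section
/- For σ ∈ D_n written as σ = τπ with π ∈ S_n and τ ∈ T = {τ ∈ D_n : des(τ) = 0}, the statistics Σ_{i∈DNeg(τπ)} τπ(i) = Σ_{i∈DNeg(τ)} τ(i) and dneg(τπ) = dneg(τ) are independent of π; moreover D_n is the disjoint union over π ∈ S_n of the cosets {τπ : τ ∈ T}. -/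
open Finset

noncomputable section
open scoped Classical

/-- Right composition of a signed permutation `τ` with an unsigned permutation `π`:
the signed permutation with window `(τπ)(i) = τ(π(i))`. -/
def compR {n : ℕ} (τ : SignedPerm n) (π : Equiv.Perm (Fin n)) : SignedPerm n :=
  (τ.1 * π, fun i => τ.2 (π i))

/-! Writing `σ = τπ` permutes the window of `τ` by `π`, so every statistic that only depends on
the set of window values is the same for `τπ` and `τ`. The window entries of `σ` are
distinct (their absolute values are `|σ|(i) + 1`), and `des(τ) = 0` says that the window of `τ`
is increasing; hence `σ = τπ` with `τ ∈ T` forces `π⁻¹` to be the unique permutation sorting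
the window of `σ`, and then `τ = σπ⁻¹`. Right composition preserves the number of negative
entries, so `τ ∈ D_n` whenever `σ ∈ D_n`. -/

lemma Tuple.eq_sort_iff_of_injective {α : Type*} [LinearOrder α] {n : ℕ} {f : Fin n → α}
    (hf : Function.Injective f) {σ : Equiv.Perm (Fin n)} :
    σ = Tuple.sort f ↔ Monotone (f ∘ σ) := by
  rw [Tuple.eq_sort_iff]
  exact and_iff_left fun i j hij hfij => (lt_irrefl j (σ.injective (hf hfij) ▸ hij)).elim

section

variable {n : ℕ}

lemma natAbs_win (σ : SignedPerm n) (i : Fin n) : (win σ i).natAbs = (σ.1 i : ℕ) + 1 := by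
  unfold win
  split <;> omega

lemma win_injective (σ : SignedPerm n) : Function.Injective (win σ) := fun i j h =>
  σ.1.injective <| Fin.ext <| by simpa [natAbs_win] using congrArg Int.natAbs h

lemma desB_eq_zero_iff_monotone (σ : SignedPerm n) : desB σ = 0 ↔ Monotone (win σ) := by
  rw [monotone_iff_forall_covBy, desB, desSetB, card_eq_zero, filter_eq_empty_iff]
  simp only [Fin.covBy_iff, Nat.covBy_iff_add_one_eq, mem_univ, true_implies, not_exists, not_lt]
  constructor
  · rintro h a ⟨b, hb⟩ (rfl : a.1 + 1 = b)
    exact h hb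
  · exact fun h a ha => h a ⟨a + 1, ha⟩ rfl

lemma compR_one (τ : SignedPerm n) : compR τ 1 = τ := rfl

lemma compR_compR (τ : SignedPerm n) (π π' : Equiv.Perm (Fin n)) :
    compR (compR τ π) π' = compR τ (π * π') := rfl

lemma compR_eq_iff {τ σ : SignedPerm n} {π : Equiv.Perm (Fin n)} :
    compR τ π = σ ↔ τ = compR σ π⁻¹ := by
  constructor <;> rintro rfl
  · rw [compR_compR, mul_inv_cancel, compR_one]
  · rw [compR_compR, inv_mul_cancel, compR_one]

lemma win_compR (τ : SignedPerm n) (π : Equiv.Perm (Fin n)) : win (compR τ π) = win τ ∘ π := by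
  funext i
  simp [win, compR]

lemma filter_win_compR (τ : SignedPerm n) (π : Equiv.Perm (Fin n)) (p : ℤ → Prop)
    [DecidablePred p] :
    univ.filter (fun i => p (win (compR τ π) i)) =
      (univ.filter fun i => p (win τ i)).map π.symm.toEmbedding := by
  ext i
  simp [win_compR]

lemma negc_compR (τ : SignedPerm n) (π : Equiv.Perm (Fin n)) : negc (compR τ π) = negc τ := by
  rw [negc, filter_win_compR τ π (· < 0), card_map, negc]

lemma dneg_compR (τ : SignedPerm n) (π : Equiv.Perm (Fin n)) : dneg (compR τ π) = dneg τ := by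
  rw [dneg, dnegSet, filter_win_compR τ π (· < -1), card_map, dneg, dnegSet]

lemma sum_dnegSet_compR (τ : SignedPerm n) (π : Equiv.Perm (Fin n)) :
    ∑ i ∈ dnegSet (compR τ π), win (compR τ π) i = ∑ i ∈ dnegSet τ, win τ i := by
  rw [dnegSet, filter_win_compR τ π (· < -1), sum_map, ← dnegSet]
  simp [win_compR]

lemma desB_compR_eq_zero_iff (σ : SignedPerm n) (ρ : Equiv.Perm (Fin n)) :
    desB (compR σ ρ) = 0 ↔ ρ = Tuple.sort (win σ) := by
  rw [desB_eq_zero_iff_monotone, win_compR, Tuple.eq_sort_iff_of_injective (win_injective σ)]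

end

/-- for `τ ∈ T = {τ ∈ D_n : des(τ) = 0}` and `π ∈ S_n`, the statistics
`Σ_{i∈DNeg(τπ)} (τπ)(i)` and `dneg(τπ)` do not depend on `π`; moreover every `σ ∈ D_n`
is uniquely of the form `τπ` with `τ ∈ T`, `π ∈ S_n`. -/
theorem coset_decomposition (n : ℕ) :
    (∀ (τ : SignedPerm n), Even (negc τ) → desB τ = 0 → ∀ π : Equiv.Perm (Fin n),
      (∑ i ∈ dnegSet (compR τ π), win (compR τ π) i = ∑ i ∈ dnegSet τ, win τ i) ∧
        dneg (compR τ π) = dneg τ) ∧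
    (∀ σ : SignedPerm n, Even (negc σ) →
      ∃! tp : SignedPerm n × Equiv.Perm (Fin n),
        (Even (negc tp.1) ∧ desB tp.1 = 0) ∧ compR tp.1 tp.2 = σ) := by
  refine ⟨fun τ _ _ π => ⟨sum_dnegSet_compR τ π, dneg_compR τ π⟩, fun σ hσ => ?_⟩
  set ρ := Tuple.sort (win σ)
  refine ⟨(compR σ ρ, ρ⁻¹), ⟨⟨by rwa [negc_compR], (desB_compR_eq_zero_iff σ ρ).2 rfl⟩, ?_⟩, ?_⟩
  · exact compR_eq_iff.2 (by rw [inv_inv])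
  · rintro ⟨τ, π⟩ ⟨⟨-, hdes⟩, hcomp⟩
    dsimp only at hdes hcomp
    obtain rfl := compR_eq_iff.1 hcomp
    have hπ : π⁻¹ = ρ := (desB_compR_eq_zero_iff σ π⁻¹).1 hdes
    rw [← hπ, inv_inv]
end
end
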